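/- The left annihilator of P_n equals C_n, the linear span of the elements c_1,...,c_n. That is, x·P_n = 0 if and only if x lies in the span of {c_1,...,c_n}. -/
import Mathlib


inductive PBasis (n : ℕ) : Type
  | a : Fin n → Fin n → PBasis n
  | b : Fin n → Fin n → PBasis n
  | c : Fin n → PBasis n
  | d : Fin n → Fin n → PBasis n
  | e : Fin n → Fin n → PBasis n
  deriving DecidableEq

abbrev Pn (F : Type*) [Field F] (n : ℕ) : Type _ := PBasis n →₀ F

open PBasis in
noncomputable def mulB (F : Type*) [Field F] {n : ℕ} : PBasis n → PBasis n → Pn F n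
  | a i j, c k => if k = i then Finsupp.single (d i j) 1 else 0
  | b i j, c k => if k = i then Finsupp.single (e i j) 1 else 0
  | a i j, e k l => if i = k ∧ j = l then Finsupp.single (c j) 1 else 0
  | e k l, a i j => if i = k ∧ j = l then Finsupp.single (c j) 1 else 0
  | b i j, d k l => if i = k ∧ j = l then -Finsupp.single (c j) 1 else 0
  | d k l, b i j => if i = k ∧ j = l then -Finsupp.single (c j) 1 else 0
  | _, _ => 0

noncomputable def mulLin (F : Type*) [Field F] {n : ℕ} :
    Pn F n →ₗ[F] Pn F n →ₗ[F] Pn F n :=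
  Finsupp.lift (Pn F n →ₗ[F] Pn F n) F (PBasis n)
    (fun u => Finsupp.lift (Pn F n) F (PBasis n) (fun v => mulB F u v))

noncomputable instance (F : Type*) [Field F] (n : ℕ) : Mul (Pn F n) :=
  ⟨fun x y => mulLin F x y⟩

noncomputable def Cspan (F : Type*) [Field F] (n : ℕ) : Submodule F (Pn F n) :=
  Submodule.span F (Set.range fun i => (Finsupp.single (PBasis.c i) 1 : Pn F n))

noncomputable def Aspan (F : Type*) [Field F] (n : ℕ) : Submodule F (Pn F n) :=
  Submodule.span F {x : Pn F n | ∃ i j,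
    x = Finsupp.single (PBasis.a i j) 1 ∨ x = Finsupp.single (PBasis.b i j) 1}

noncomputable def Cbarspan (F : Type*) [Field F] (n : ℕ) : Submodule F (Pn F n) :=
  Submodule.span F {x : Pn F n | ∃ i j,
    x = Finsupp.single (PBasis.d i j) 1 ∨ x = Finsupp.single (PBasis.e i j) 1}

noncomputable def Dspan (F : Type*) [Field F] (n : ℕ) : Submodule F (Pn F n) :=
  Submodule.span F {x : Pn F n | (∃ i, x = Finsupp.single (PBasis.c i) 1) ∨
    ∃ i j, x = Finsupp.single (PBasis.d i j) 1 ∨ x = Finsupp.single (PBasis.e i j) 1}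


section Aux
variable {F : Type*} [Field F] {n : ℕ}

lemma mul_single_apply (x : Pn F n) (v w : PBasis n) :
    ((x * Finsupp.single v 1 : Pn F n)) w = x.sum fun u r => r * mulB F u v w := by
  show (mulLin F x (Finsupp.single v 1)) w = _
  rw [mulLin]
  simp [Finsupp.lift_apply, Finsupp.sum_apply, Finsupp.sum_single_index]

open PBasis in
lemma coeff_a (x : Pn F n) (h : ∀ y : Pn F n, x * y = 0) (i j : Fin n) :
    x (a i j) = 0 := by
  have h0 := congrArg (fun z : Pn F n => z (d i j)) (h (Finsupp.single (c i) 1))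
  simp only [mul_single_apply, Finsupp.coe_zero, Pi.zero_apply] at h0
  rw [Finsupp.sum_eq_single (a i j) ?h0 ?h1] at h0
  · simpa [mulB, Finsupp.single_apply] using h0
  · intro u hu hne
    cases u <;> simp_all [mulB, Finsupp.single_apply] <;> split_ifs <;> simp_all
  · intro _; simp

open PBasis in
lemma coeff_b (x : Pn F n) (h : ∀ y : Pn F n, x * y = 0) (i j : Fin n) :
    x (b i j) = 0 := by
  have h0 := congrArg (fun z : Pn F n => z (e i j)) (h (Finsupp.single (c i) 1))
  simp only [mul_single_apply, Finsupp.coe_zero, Pi.zero_apply] at h0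
  rw [Finsupp.sum_eq_single (b i j) ?h0 ?h1] at h0
  · simpa [mulB, Finsupp.single_apply] using h0
  · intro u hu hne
    cases u <;> simp_all [mulB, Finsupp.single_apply] <;> split_ifs <;> simp_all
  · intro _; simp

open PBasis in
lemma coeff_e (x : Pn F n) (h : ∀ y : Pn F n, x * y = 0) (i j : Fin n) :
    x (e i j) = 0 := by
  have h0 := congrArg (fun z : Pn F n => z (c j)) (h (Finsupp.single (a i j) 1))
  simp only [mul_single_apply, Finsupp.coe_zero, Pi.zero_apply] at h0
  rw [Finsupp.sum_eq_single (e i j) ?h0 ?h1] at h0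
  · simpa [mulB, Finsupp.single_apply] using h0
  · intro u hu hne
    cases u <;> simp_all [mulB, Finsupp.single_apply] <;> split_ifs <;> simp_all
  · intro _; simp

open PBasis in
lemma coeff_d (x : Pn F n) (h : ∀ y : Pn F n, x * y = 0) (i j : Fin n) :
    x (d i j) = 0 := by
  have h0 := congrArg (fun z : Pn F n => z (c j)) (h (Finsupp.single (b i j) 1))
  simp only [mul_single_apply, Finsupp.coe_zero, Pi.zero_apply] at h0
  rw [Finsupp.sum_eq_single (d i j) ?h0 ?h1] at h0
  · simpa [mulB, Finsupp.single_apply] using h0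
  · intro u hu hne
    cases u <;> simp_all [mulB, Finsupp.single_apply] <;> split_ifs <;> simp_all
  · intro _; simp

lemma c_mul (i : Fin n) (y : Pn F n) :
    (Finsupp.single (PBasis.c i) 1 : Pn F n) * y = 0 := by
  show mulLin F (Finsupp.single (PBasis.c i) 1) y = 0
  rw [mulLin]
  simp only [Finsupp.lift_apply, Finsupp.sum_single_index, zero_smul, one_smul]
  have : ∀ v : PBasis n, mulB F (PBasis.c i) v = 0 := by
    intro v; cases v <;> rfl
  simp [this]

end Aux

theorem stmt (F : Type*) [Field F] (n : ℕ) (x : Pn F n) :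
    (∀ y : Pn F n, x * y = 0) ↔ x ∈ Cspan F n := by
  constructor
  · intro h
    have hx : x = x.sum fun u r => Finsupp.single u r := (Finsupp.sum_single x).symm
    rw [hx]
    apply Submodule.sum_mem
    intro u hu
    cases u with
    | c i =>
        have : Finsupp.single (PBasis.c i) (x (PBasis.c i))
            = x (PBasis.c i) • Finsupp.single (PBasis.c i) (1 : F) := by
          rw [Finsupp.smul_single, smul_eq_mul, mul_one]
        show (Finsupp.single (PBasis.c i) (x (PBasis.c i)) : Pn F n) ∈ Cspan F n
        rw [this]
        exact Submodule.smul_mem _ _ (Submodule.subset_span ⟨i, rfl⟩)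
    | a i j => exact absurd (coeff_a x h i j) (Finsupp.mem_support_iff.mp hu)
    | b i j => exact absurd (coeff_b x h i j) (Finsupp.mem_support_iff.mp hu)
    | d i j => exact absurd (coeff_d x h i j) (Finsupp.mem_support_iff.mp hu)
    | e i j => exact absurd (coeff_e x h i j) (Finsupp.mem_support_iff.mp hu)
  · intro hx y
    show mulLin F x y = 0
    induction hx using Submodule.span_induction with
    | mem z hz =>
        obtain ⟨i, rfl⟩ := hz
        exact c_mul i y
    | zero => simp
    | add a b _ _ ha hb => simp [map_add, ha, hb]
    | smul r a _ ha => simp [map_smul, ha]
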